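/- Let A > 0 and define d(k;A) = √(D(k;A)), the principal square root of D(k;A). Then: (a) there exist constants C > 0 and R > 0 such that |d(k;A) − 1| ≤ C/|k| for all |k| ≥ R (i.e. d(k;A) = 1 + O(1/k) as k → ∞); and (b) for every y ∈ (−A, A), lim_{ε→0⁺} d(iy − ε; A) · d(iy; A) = 2λ(iy;A)/A. -/

import Mathlib

/-- The argument of a complex number normalized to lie in `[−π/2, 3π/2)`:
if `arg z ∈ (−π, −π/2)` we add `2π`. -/
noncomputable def argS (z : ℂ) : ℝ :=
  if Complex.arg z < -(Real.pi / 2) then Complex.arg z + 2 * Real.pi else Complex.arg z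

/-- The branch `λ(k;A) = √(r₁r₂)·exp(i(φ₁+φ₂)/2)` of `(k² + A²)^{1/2}`, where
`k − iA = r₁e^{iφ₁}`, `k + iA = r₂e^{iφ₂}` with `φ₁, φ₂ ∈ [−π/2, 3π/2)`;
its branch cut lies along the segment `i[−A,A]` and it is continuous from the
right on the cut. -/
noncomputable def lamBr (A : ℝ) (k : ℂ) : ℂ :=
  ((Real.sqrt (‖k - Complex.I * (A : ℂ)‖ * ‖k + Complex.I * (A : ℂ)‖) : ℝ) : ℂ) *
    Complex.exp (Complex.I *
      (((argS (k - Complex.I * (A : ℂ)) + argS (k + Complex.I * (A : ℂ))) / 2 : ℝ) : ℂ))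

/-- `D(k;A) = 2λ(k;A)/(λ(k;A) + k)`. -/
noncomputable def Dfun (A : ℝ) (k : ℂ) : ℂ := 2 * lamBr A k / (lamBr A k + k)

/-- `d(k;A) = √(D(k;A))`, the principal square root of `D(k;A)`
(branch cut along the negative real axis). -/
noncomputable def dfun (A : ℝ) (k : ℂ) : ℂ := Dfun A k ^ ((1 : ℂ) / 2)

lemma argS_spec (z : ℂ) : (‖z‖ : ℂ) * Complex.exp (Complex.I * argS z) = z := by
  unfold argS
  split_ifs with h
  · push_cast
    rw [mul_add, Complex.exp_add]
    have h2 : Complex.exp (Complex.I * (2*(Real.pi:ℂ))) = 1 := by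
      rw [mul_comm, Complex.exp_mul_I, Complex.cos_two_pi, Complex.sin_two_pi]
      ring
    rw [h2, mul_one, mul_comm Complex.I]
    exact Complex.norm_mul_exp_arg_mul_I z
  · rw [mul_comm Complex.I]
    exact Complex.norm_mul_exp_arg_mul_I z

lemma argS_lb (z : ℂ) : -(Real.pi/2) ≤ argS z := by
  unfold argS
  split_ifs with h
  · nlinarith [Complex.neg_pi_lt_arg z, Real.pi_pos]
  · linarith [not_lt.mp h]

lemma argS_of_re_pos {z : ℂ} (h : 0 < z.re) :
    argS z ∈ Set.Ioo (-(Real.pi/2)) (Real.pi/2) := by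
  have h1 : |z.arg| < Real.pi/2 := Complex.abs_arg_lt_pi_div_two_iff.mpr (Or.inl h)
  rw [abs_lt] at h1
  unfold argS
  rw [if_neg (not_lt.mpr h1.1.le)]
  exact ⟨h1.1, h1.2⟩

lemma argS_of_re_neg {z : ℂ} (h : z.re < 0) :
    argS z ∈ Set.Ioo (Real.pi/2) (3*Real.pi/2) := by
  have hz : z ≠ 0 := fun hz => by simp [hz] at h
  have h1 : ¬ |z.arg| ≤ Real.pi/2 := by
    rw [Complex.abs_arg_le_pi_div_two_iff]; linarith
  rw [not_le, lt_abs] at h1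
  unfold argS
  rcases h1 with h1 | h1
  · rw [if_neg (by push_neg; nlinarith [Real.pi_pos])]
    exact ⟨h1, by nlinarith [Complex.arg_le_pi z, Real.pi_pos]⟩
  · rw [if_pos (by linarith)]
    constructor <;> nlinarith [Complex.neg_pi_lt_arg z]

lemma argS_of_im_pos_re_zero {z : ℂ} (h : 0 < z.im) (h0 : z.re = 0) :
    argS z = Real.pi/2 := by
  have := Complex.arg_eq_pi_div_two_iff.mpr ⟨h0, h⟩
  unfold argS
  rw [this, if_neg (by push_neg; nlinarith [Real.pi_pos])]

lemma argS_of_im_neg_re_zero {z : ℂ} (h : z.im < 0) (h0 : z.re = 0) :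
    argS z = -(Real.pi/2) := by
  have := Complex.arg_eq_neg_pi_div_two_iff.mpr ⟨h0, h⟩
  unfold argS
  rw [this, if_neg (by simp)]

lemma chord_sq (s t : ℝ) :
    ‖Complex.exp (Complex.I*s) - Complex.exp (Complex.I*t)‖^2
      = 2 - 2*Real.cos (s - t) := by
  have h1 : ∀ x : ℝ, (Complex.exp (Complex.I*(x:ℂ))).re = Real.cos x := by
    intro x; rw [mul_comm]; exact Complex.exp_ofReal_mul_I_re x
  have h2 : ∀ x : ℝ, (Complex.exp (Complex.I*(x:ℂ))).im = Real.sin x := by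
    intro x; rw [mul_comm]; exact Complex.exp_ofReal_mul_I_im x
  rw [Complex.sq_norm, Complex.normSq_apply, Complex.sub_re, Complex.sub_im,
    h1, h1, h2, h2, Real.cos_sub]
  nlinarith [Real.sin_sq_add_cos_sq s, Real.sin_sq_add_cos_sq t]

lemma lamBr_sq' (A : ℝ) (k : ℂ) :
    lamBr A k ^ 2 = (k - Complex.I*(A:ℂ)) * (k + Complex.I*(A:ℂ)) := by
  have e1 := argS_spec (k - Complex.I*(A:ℂ))
  have e2 := argS_spec (k + Complex.I*(A:ℂ))
  have hsq : ((Real.sqrt (‖k - Complex.I*(A:ℂ)‖ * ‖k + Complex.I*(A:ℂ)‖) : ℝ):ℂ)^2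
      = (‖k - Complex.I*(A:ℂ)‖ : ℂ) * (‖k + Complex.I*(A:ℂ)‖ : ℂ) := by
    norm_cast
    rw [Real.sq_sqrt (by positivity)]
  have hexp : Complex.exp (Complex.I * (((argS (k - Complex.I*(A:ℂ)) + argS (k + Complex.I*(A:ℂ)))/2 : ℝ):ℂ))^2
      = Complex.exp (Complex.I * (argS (k - Complex.I*(A:ℂ)) : ℂ)) * Complex.exp (Complex.I * (argS (k + Complex.I*(A:ℂ)) : ℂ)) := by
    rw [sq, ← Complex.exp_add, ← Complex.exp_add]
    congr 1
    push_cast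
    ring
  unfold lamBr
  rw [mul_pow, hsq, hexp]
  calc (‖k - Complex.I*(A:ℂ)‖ : ℂ) * (‖k + Complex.I*(A:ℂ)‖ : ℂ) *
        (Complex.exp (Complex.I * (argS (k - Complex.I*(A:ℂ)) : ℂ)) * Complex.exp (Complex.I * (argS (k + Complex.I*(A:ℂ)) : ℂ)))
      = ((‖k - Complex.I*(A:ℂ)‖ : ℂ) * Complex.exp (Complex.I * (argS (k - Complex.I*(A:ℂ)) : ℂ))) *
        ((‖k + Complex.I*(A:ℂ)‖ : ℂ) * Complex.exp (Complex.I * (argS (k + Complex.I*(A:ℂ)) : ℂ))) := by ring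
    _ = (k - Complex.I*(A:ℂ)) * (k + Complex.I*(A:ℂ)) := by rw [e1, e2]

lemma lamBr_sq (A : ℝ) (k : ℂ) : lamBr A k ^ 2 = k^2 + (A:ℂ)^2 := by
  rw [lamBr_sq']
  linear_combination (-(A:ℂ)^2) * Complex.I_sq

lemma abs_lamBr (A : ℝ) (k : ℂ) :
    ‖lamBr A k‖
      = Real.sqrt (‖k - Complex.I*(A:ℂ)‖ * ‖k + Complex.I*(A:ℂ)‖) := by
  unfold lamBr
  rw [norm_mul, Complex.norm_real, Real.norm_eq_abs, abs_of_nonneg (Real.sqrt_nonneg _), Complex.norm_exp]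
  simp

lemma unit_diff_le {z w : ℂ} (hz : z ≠ 0) (hw : w ≠ 0) :
    ‖z/(‖z‖:ℂ) - w/(‖w‖:ℂ)‖
      ≤ 2 * ‖z - w‖ / ‖z‖ := by
  have ha : (0:ℝ) < ‖z‖ := norm_pos_iff.mpr hz
  have hb : (0:ℝ) < ‖w‖ := norm_pos_iff.mpr hw
  have hid : z/(‖z‖:ℂ) - w/(‖w‖:ℂ)
      = (z - w)/(‖z‖:ℂ)
        + w * ((((‖w‖ - ‖z‖ : ℝ)):ℂ)/((‖z‖:ℂ)*(‖w‖:ℂ))) := by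
    have haz : (‖z‖ : ℂ) ≠ 0 := by exact_mod_cast ha.ne'
    have hbz : (‖w‖ : ℂ) ≠ 0 := by exact_mod_cast hb.ne'
    field_simp
    push_cast; ring
  have hA1 : ‖(z - w)/(‖z‖:ℂ)‖ = ‖z - w‖/‖z‖ := by
    rw [norm_div, Complex.norm_real, Real.norm_eq_abs, abs_of_pos ha]
  have hA2 : ‖w * ((((‖w‖ - ‖z‖ : ℝ)):ℂ)/((‖z‖:ℂ)*(‖w‖:ℂ)))‖
      = |‖w‖ - ‖z‖|/‖z‖ := by
    rw [norm_mul, norm_div, norm_mul, Complex.norm_real, Real.norm_eq_abs, Complex.norm_real, Real.norm_eq_abs, Complex.norm_real, Real.norm_eq_abs,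
      abs_of_pos ha, abs_of_pos hb]
    field_simp
  have h2 : |‖w‖ - ‖z‖| ≤ ‖z - w‖ := by
    have := abs_norm_sub_norm_le w z
    rwa [← norm_neg (w - z), neg_sub] at this
  calc ‖z/(‖z‖:ℂ) - w/(‖w‖:ℂ)‖
      ≤ ‖(z - w)/(‖z‖:ℂ)‖
        + ‖w * ((((‖w‖ - ‖z‖ : ℝ)):ℂ)/((‖z‖:ℂ)*(‖w‖:ℂ)))‖ := by
        rw [hid]; exact norm_add_le _ _
    _ = ‖z - w‖/‖z‖ + |‖w‖ - ‖z‖|/‖z‖ := by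
        rw [hA1, hA2]
    _ ≤ 2 * ‖z - w‖ / ‖z‖ := by
        rw [← add_div]
        gcongr
        linarith

lemma argS_close {A : ℝ} (hA : 0 < A) {z k : ℂ} (hre : z.re = k.re)
    (hd : ‖z - k‖ ≤ A) (hk : 5*A ≤ ‖k‖) :
    7/8 ≤ Real.cos (argS z - argS k) ∧ |argS z - argS k| ≤ Real.pi := by
  have habs : (0:ℝ) < ‖k‖ := lt_of_lt_of_le (by positivity) hk
  have hk0 : k ≠ 0 := by
    intro h; rw [h] at habs; simp at habs
  have hzk : |‖z‖ - ‖k‖| ≤ A :=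
    le_trans (abs_norm_sub_norm_le z k) hd
  rw [abs_le] at hzk
  have hz_abs : 4*A ≤ ‖z‖ := by linarith
  have hz0 : z ≠ 0 := by
    intro h; rw [h] at hz_abs; simp at hz_abs; linarith
  have him : |z.im - k.im| ≤ A := by
    have h1 : |(z - k).im| ≤ ‖z - k‖ := Complex.abs_im_le_norm _
    simpa using h1.trans hd
  rw [abs_le] at him
  have hpi : |argS z - argS k| ≤ Real.pi := by
    rcases lt_trichotomy k.re 0 with h | h | h
    · have h1 := argS_of_re_neg (hre ▸ h)
      have h2 := argS_of_re_neg h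
      rw [Set.mem_Ioo] at h1 h2
      rw [abs_le]; constructor <;> linarith
    · have hkim : 5*A ≤ |k.im| := by
        have := Complex.norm_le_abs_re_add_abs_im k
        rw [h] at this; simp at this; linarith
      rcases abs_le.mp (le_refl |k.im|) with _
      rcases lt_trichotomy k.im 0 with hi | hi | hi
      · have hkim' : k.im ≤ -(5*A) := by
          rcases abs_cases k.im with ⟨h3, _⟩ | ⟨h3, _⟩ <;> linarith
        have hzim : z.im < 0 := by linarith
        rw [argS_of_im_neg_re_zero hzim (hre.trans h), argS_of_im_neg_re_zero hi h]
        simp [Real.pi_pos.le]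
      · exfalso
        rw [hi] at hkim; simp at hkim; linarith
      · have hkim' : (5*A) ≤ k.im := by
          rcases abs_cases k.im with ⟨h3, _⟩ | ⟨h3, _⟩ <;> linarith
        have hzim : 0 < z.im := by linarith
        rw [argS_of_im_pos_re_zero hzim (hre.trans h), argS_of_im_pos_re_zero hi h]
        simp [Real.pi_pos.le]
    · have h1 := argS_of_re_pos (hre ▸ h)
      have h2 := argS_of_re_pos h
      rw [Set.mem_Ioo] at h1 h2
      rw [abs_le]; constructor <;> linarith
  refine ⟨?_, hpi⟩
  have e1 : Complex.exp (Complex.I * (argS z : ℂ)) = z / (‖z‖ : ℂ) := by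
    rw [eq_div_iff (by exact_mod_cast (norm_pos_iff.mpr hz0).ne')]
    rw [mul_comm]; exact argS_spec z
  have e2 : Complex.exp (Complex.I * (argS k : ℂ)) = k / (‖k‖ : ℂ) := by
    rw [eq_div_iff (by exact_mod_cast habs.ne')]
    rw [mul_comm]; exact argS_spec k
  have hu : ‖Complex.exp (Complex.I * (argS z : ℂ)) - Complex.exp (Complex.I * (argS k : ℂ))‖ ≤ 1/2 := by
    rw [e1, e2]
    refine (unit_diff_le hz0 hk0).trans ?_
    rw [div_le_iff₀ (by linarith)]
    nlinarith
  have hcs := chord_sq (argS z) (argS k)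
  nlinarith [norm_nonneg (Complex.exp (Complex.I * (argS z : ℂ)) - Complex.exp (Complex.I * (argS k : ℂ)))]

lemma re_lam_conj_nonneg {A : ℝ} (hA : 0 < A) {k : ℂ} (hk : 5*A ≤ ‖k‖) :
    0 ≤ (lamBr A k * (starRingEnd ℂ) k).re := by
  have habs : (0:ℝ) < ‖k‖ := lt_of_lt_of_le (by positivity) hk
  have hk0 : k ≠ 0 := by intro h; rw [h] at habs; simp at habs
  have hd1 : ‖(k - Complex.I*(A:ℂ)) - k‖ ≤ A := by
    have : (k - Complex.I*(A:ℂ)) - k = -(Complex.I*(A:ℂ)) := by ring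
    rw [this, norm_neg, norm_mul, Complex.norm_I, Complex.norm_real, Real.norm_eq_abs, one_mul,
      abs_of_pos hA]
  have hd2 : ‖(k + Complex.I*(A:ℂ)) - k‖ ≤ A := by
    have : (k + Complex.I*(A:ℂ)) - k = Complex.I*(A:ℂ) := by ring
    rw [this, norm_mul, Complex.norm_I, Complex.norm_real, Real.norm_eq_abs, one_mul, abs_of_pos hA]
  have hre1 : (k - Complex.I*(A:ℂ)).re = k.re := by simp
  have hre2 : (k + Complex.I*(A:ℂ)).re = k.re := by simp
  obtain ⟨hc1, hp1⟩ := argS_close hA hre1 hd1 hk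
  obtain ⟨hc2, hp2⟩ := argS_close hA hre2 hd2 hk
  set φ1 := argS (k - Complex.I*(A:ℂ))
  set φ2 := argS (k + Complex.I*(A:ℂ))
  set χ := argS k
  -- cosine of the half-sum
  have hcos : 0 ≤ Real.cos ((φ1 + φ2)/2 - χ) := by
    have hsplit : (φ1 + φ2)/2 - χ = (φ1 - χ)/2 + (φ2 - χ)/2 := by ring
    rw [hsplit, Real.cos_add]
    have hs1 : Real.sin ((φ1 - χ)/2)^2 ≤ 1/16 := by
      rw [Real.sin_sq_eq_half_sub, show 2*((φ1 - χ)/2) = φ1 - χ by ring]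
      linarith
    have hs2 : Real.sin ((φ2 - χ)/2)^2 ≤ 1/16 := by
      rw [Real.sin_sq_eq_half_sub, show 2*((φ2 - χ)/2) = φ2 - χ by ring]
      linarith
    have hb1 := abs_le.mp hp1
    have hb2 := abs_le.mp hp2
    have hc1' : 0 ≤ Real.cos ((φ1 - χ)/2) :=
      Real.cos_nonneg_of_mem_Icc ⟨by linarith, by linarith⟩
    have hc2' : 0 ≤ Real.cos ((φ2 - χ)/2) :=
      Real.cos_nonneg_of_mem_Icc ⟨by linarith, by linarith⟩
    nlinarith [Real.sin_sq_add_cos_sq ((φ1 - χ)/2), Real.sin_sq_add_cos_sq ((φ2 - χ)/2),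
      mul_nonneg hc1' hc2']
  -- rewrite the product
  have hconj : (starRingEnd ℂ) k = (‖k‖ : ℂ) * Complex.exp (Complex.I * ((-χ : ℝ):ℂ)) := by
    conv_lhs => rw [← argS_spec k]
    rw [map_mul, ← Complex.exp_conj, map_mul, Complex.conj_I, Complex.conj_ofReal]
    simp only [Complex.conj_ofReal]
    push_cast
    ring_nf
    rfl
  have hprod : lamBr A k * (starRingEnd ℂ) k
      = ((Real.sqrt (‖k - Complex.I*(A:ℂ)‖ * ‖k + Complex.I*(A:ℂ)‖) * ‖k‖ : ℝ) : ℂ)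
        * Complex.exp (Complex.I * (((φ1 + φ2)/2 - χ : ℝ) : ℂ)) := by
    unfold lamBr
    rw [hconj]
    have harg : Complex.I * (((φ1+φ2)/2 : ℝ):ℂ) + Complex.I * ((-χ : ℝ):ℂ)
        = Complex.I * (((φ1+φ2)/2 - χ : ℝ):ℂ) := by push_cast; ring
    calc ((Real.sqrt (‖k - Complex.I*(A:ℂ)‖ * ‖k + Complex.I*(A:ℂ)‖) : ℝ):ℂ)
          * Complex.exp (Complex.I * (((φ1 + φ2)/2 : ℝ):ℂ))
          * ((‖k‖ : ℂ) * Complex.exp (Complex.I * ((-χ : ℝ):ℂ)))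
        = ((Real.sqrt (‖k - Complex.I*(A:ℂ)‖ * ‖k + Complex.I*(A:ℂ)‖) : ℝ):ℂ) * (‖k‖ : ℂ)
          * (Complex.exp (Complex.I * (((φ1 + φ2)/2 : ℝ):ℂ)) * Complex.exp (Complex.I * ((-χ : ℝ):ℂ))) := by
          ring
      _ = ((Real.sqrt (‖k - Complex.I*(A:ℂ)‖ * ‖k + Complex.I*(A:ℂ)‖) * ‖k‖ : ℝ) : ℂ)
          * Complex.exp (Complex.I * (((φ1 + φ2)/2 - χ : ℝ) : ℂ)) := by
          rw [← Complex.exp_add, harg]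
          norm_cast
  rw [hprod, Complex.re_ofReal_mul,
    show Complex.I * (((φ1 + φ2)/2 - χ : ℝ):ℂ) = (((φ1 + φ2)/2 - χ : ℝ):ℂ) * Complex.I from mul_comm _ _,
    Complex.exp_ofReal_mul_I_re]
  exact mul_nonneg (mul_nonneg (Real.sqrt_nonneg _) (norm_nonneg _)) hcos

lemma dfun_re_nonneg {A : ℝ} {k : ℂ} (h : Dfun A k ≠ 0) : 0 ≤ (dfun A k).re := by
  unfold dfun
  rw [Complex.cpow_def_of_ne_zero h, Complex.exp_re]
  have him : (Complex.log (Dfun A k) * ((1:ℂ)/2)).im = (Dfun A k).arg / 2 := by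
    simp [Complex.mul_im, Complex.log_im]
    ring
  rw [him]
  apply mul_nonneg (Real.exp_pos _).le
  apply Real.cos_nonneg_of_mem_Icc
  constructor
  · nlinarith [Complex.neg_pi_lt_arg (Dfun A k)]
  · nlinarith [Complex.arg_le_pi (Dfun A k)]

lemma dfun_sq {A : ℝ} {k : ℂ} (h : Dfun A k ≠ 0) : dfun A k ^ 2 = Dfun A k := by
  unfold dfun
  rw [sq, ← Complex.cpow_add _ _ h]
  norm_num

lemma part_a {A : ℝ} (hA : 0 < A) {k : ℂ} (hk : 5*A ≤ ‖k‖) :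
    ‖dfun A k - 1‖ ≤ A / ‖k‖ := by
  have habs : (0:ℝ) < ‖k‖ := lt_of_lt_of_le (by positivity) hk
  have hr1 : 4*A ≤ ‖k - Complex.I*(A:ℂ)‖ := by
    have h1 : ‖k‖ ≤ ‖k - Complex.I*(A:ℂ)‖ + ‖Complex.I*(A:ℂ)‖ := by
      have := norm_add_le (k - Complex.I*(A:ℂ)) (Complex.I*(A:ℂ))
      simpa using this
    have h2 : ‖Complex.I*(A:ℂ)‖ = A := by
      rw [norm_mul, Complex.norm_I, Complex.norm_real, Real.norm_eq_abs, one_mul, abs_of_pos hA]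
    linarith
  have hr2 : 4*A ≤ ‖k + Complex.I*(A:ℂ)‖ := by
    have h1 : ‖k‖ ≤ ‖k + Complex.I*(A:ℂ)‖ + ‖Complex.I*(A:ℂ)‖ := by
      have := norm_add_le (k + Complex.I*(A:ℂ)) (-(Complex.I*(A:ℂ)))
      simpa using this
    have h2 : ‖Complex.I*(A:ℂ)‖ = A := by
      rw [norm_mul, Complex.norm_I, Complex.norm_real, Real.norm_eq_abs, one_mul, abs_of_pos hA]
    linarith
  have hlam_pos : 0 < ‖lamBr A k‖ := by
    rw [abs_lamBr]
    apply Real.sqrt_pos.mpr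
    nlinarith
  have hlam_ne : lamBr A k ≠ 0 := by
    intro h; rw [h] at hlam_pos; simp at hlam_pos
  have hsum : ‖k‖ ≤ ‖lamBr A k + k‖ := by
    have h1 := Complex.normSq_add (lamBr A k) k
    have h2 : ‖lamBr A k + k‖^2 = Complex.normSq (lamBr A k + k) := Complex.sq_norm _
    have h3 : ‖lamBr A k‖^2 = Complex.normSq (lamBr A k) := Complex.sq_norm _
    have h4 : ‖k‖^2 = Complex.normSq k := Complex.sq_norm _
    have h5 := re_lam_conj_nonneg hA hk
    nlinarith [norm_nonneg (lamBr A k + k), norm_nonneg (lamBr A k)]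
  have hsum_ne : lamBr A k + k ≠ 0 := by
    intro h
    rw [h] at hsum; simp at hsum; simp [hsum] at habs
  have hD : Dfun A k - 1 = (A:ℂ)^2 / (lamBr A k + k)^2 := by
    unfold Dfun
    rw [div_sub' hsum_ne, div_eq_div_iff hsum_ne (pow_ne_zero 2 hsum_ne)]
    linear_combination (lamBr A k + k) * lamBr_sq A k
  have hDne : Dfun A k ≠ 0 := by
    unfold Dfun
    exact div_ne_zero (mul_ne_zero two_ne_zero hlam_ne) hsum_ne
  have hDabs : ‖Dfun A k - 1‖ ≤ A^2/(‖k‖)^2 := by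
    rw [hD, norm_div, norm_pow, norm_pow, Complex.norm_real, Real.norm_eq_abs, abs_of_pos hA]
    gcongr
  have habs1 : 1 ≤ ‖dfun A k + 1‖ := by
    have h1 : (dfun A k + 1).re ≤ ‖dfun A k + 1‖ := Complex.re_le_norm _
    have h2 : (dfun A k + 1).re = (dfun A k).re + 1 := by simp
    have h3 := dfun_re_nonneg hDne
    linarith
  have key : ‖dfun A k - 1‖ ≤ ‖Dfun A k - 1‖ := by
    have hfac : (dfun A k - 1) * (dfun A k + 1) = Dfun A k - 1 := by
      linear_combination dfun_sq hDne
    calc ‖dfun A k - 1‖ = ‖dfun A k - 1‖ * 1 := by ring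
      _ ≤ ‖dfun A k - 1‖ * ‖dfun A k + 1‖ := by
          gcongr
      _ = ‖(dfun A k - 1) * (dfun A k + 1)‖ := (norm_mul _ _).symm
      _ = ‖Dfun A k - 1‖ := by rw [hfac]
  refine key.trans (hDabs.trans ?_)
  rw [div_le_div_iff₀ (by positivity) habs]
  have hAk : A ≤ ‖k‖ := by linarith
  nlinarith [mul_le_mul_of_nonneg_left hAk (mul_pos hA habs).le]

lemma argS_eq_arg_of_im_pos {z : ℂ} (h : 0 < z.im) : argS z = Complex.arg z := by
  unfold argS
  rw [if_neg]
  push_neg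
  have := Complex.arg_nonneg_iff.mpr h.le
  nlinarith [Real.pi_pos]

lemma arg_lt_neg_pi_div_two {z : ℂ} (hre : z.re < 0) (him : z.im < 0) :
    Complex.arg z < -(Real.pi/2) := by
  have h1 : Complex.arg z < 0 := Complex.arg_neg_iff.mpr him
  have h2 : ¬ (|Complex.arg z| ≤ Real.pi/2) := by
    rw [Complex.abs_arg_le_pi_div_two_iff]; linarith
  rw [not_le, lt_abs] at h2
  rcases h2 with h2 | h2 <;> linarith

lemma lamBr_cut {A y : ℝ} (hy : y ∈ Set.Ioo (-A) A) :
    lamBr A (Complex.I * (y:ℂ)) = ((Real.sqrt ((A - y)*(A + y)) : ℝ) : ℂ) := by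
  obtain ⟨hy1, hy2⟩ := hy
  have hz1 : Complex.I * (y:ℂ) - Complex.I * (A:ℂ) = ((y - A : ℝ):ℂ) * Complex.I := by
    push_cast; ring
  have hz2 : Complex.I * (y:ℂ) + Complex.I * (A:ℂ) = ((y + A : ℝ):ℂ) * Complex.I := by
    push_cast; ring
  have habs1 : ‖Complex.I * (y:ℂ) - Complex.I * (A:ℂ)‖ = A - y := by
    rw [hz1, norm_mul, Complex.norm_real, Real.norm_eq_abs, Complex.norm_I, mul_one, abs_of_neg (by linarith)]
    ring
  have habs2 : ‖Complex.I * (y:ℂ) + Complex.I * (A:ℂ)‖ = A + y := by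
    rw [hz2, norm_mul, Complex.norm_real, Real.norm_eq_abs, Complex.norm_I, mul_one, abs_of_pos (by linarith)]
    ring
  have harg1 : argS (Complex.I * (y:ℂ) - Complex.I * (A:ℂ)) = -(Real.pi/2) := by
    rw [hz1]
    exact argS_of_im_neg_re_zero (by simp; linarith) (by simp)
  have harg2 : argS (Complex.I * (y:ℂ) + Complex.I * (A:ℂ)) = Real.pi/2 := by
    rw [hz2]
    exact argS_of_im_pos_re_zero (by simp; linarith) (by simp)
  unfold lamBr
  rw [habs1, habs2, harg1, harg2]
  norm_num

open Filter Topology in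
lemma lamBr_tendsto {A y : ℝ} (hA : 0 < A) (hy : y ∈ Set.Ioo (-A) A) :
    Tendsto (fun ε : ℝ => lamBr A (Complex.I * (y:ℂ) - (ε:ℂ)))
      (nhdsWithin 0 (Set.Ioi 0))
      (nhds (-(((Real.sqrt ((A - y)*(A + y)) : ℝ) : ℂ)))) := by
  obtain ⟨hy1, hy2⟩ := hy
  set f : ℝ → ℂ := fun ε => Complex.I * (y:ℂ) - (ε:ℂ) with hf
  have hfc : Continuous f := by fun_prop
  have hre1 : ∀ ε : ℝ, (f ε - Complex.I * (A:ℂ)).re = -ε := by intro ε; simp [hf]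
  have him1 : ∀ ε : ℝ, (f ε - Complex.I * (A:ℂ)).im = y - A := by intro ε; simp [hf]
  have hre2 : ∀ ε : ℝ, (f ε + Complex.I * (A:ℂ)).re = -ε := by intro ε; simp [hf]
  have him2 : ∀ ε : ℝ, (f ε + Complex.I * (A:ℂ)).im = y + A := by intro ε; simp [hf]
  -- modulus part
  have hmod : Tendsto (fun ε : ℝ =>
      (Real.sqrt (‖f ε - Complex.I * (A:ℂ)‖ * ‖f ε + Complex.I * (A:ℂ)‖) : ℝ))
      (nhdsWithin 0 (Set.Ioi 0)) (nhds (Real.sqrt ((A - y)*(A + y)))) := by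
    have hc : Continuous (fun ε : ℝ =>
        Real.sqrt (‖f ε - Complex.I * (A:ℂ)‖ * ‖f ε + Complex.I * (A:ℂ)‖)) := by
      apply Real.continuous_sqrt.comp
      exact ((continuous_norm.comp (hfc.sub continuous_const)).mul
        (continuous_norm.comp (hfc.add continuous_const)))
    have h0 : Real.sqrt (‖f 0 - Complex.I * (A:ℂ)‖ * ‖f 0 + Complex.I * (A:ℂ)‖)
        = Real.sqrt ((A - y)*(A + y)) := by
      have e1 : f 0 - Complex.I * (A:ℂ) = ((y - A : ℝ):ℂ) * Complex.I := by
        simp [hf]; push_cast; ring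
      have e2 : f 0 + Complex.I * (A:ℂ) = ((y + A : ℝ):ℂ) * Complex.I := by
        simp [hf]; push_cast; ring
      rw [e1, e2, norm_mul, norm_mul, Complex.norm_real, Real.norm_eq_abs, Complex.norm_I, mul_one, mul_one,
        Complex.norm_real, Real.norm_eq_abs, abs_of_neg (by linarith), abs_of_pos (by linarith)]
      ring_nf
    rw [← h0]
    exact (hc.tendsto 0).mono_left nhdsWithin_le_nhds
  -- first argument part
  have harg1 : Tendsto (fun ε : ℝ => argS (f ε - Complex.I * (A:ℂ)))
      (nhdsWithin 0 (Set.Ioi 0)) (nhds (3*Real.pi/2)) := by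
    have heq : ∀ ε ∈ Set.Ioi (0:ℝ),
        argS (f ε - Complex.I * (A:ℂ)) = Complex.arg (f ε - Complex.I * (A:ℂ)) + 2*Real.pi := by
      intro ε hε
      unfold argS
      rw [if_pos]
      exact arg_lt_neg_pi_div_two (by rw [hre1]; simpa using hε) (by rw [him1]; linarith)
    have hargc : Tendsto (fun ε : ℝ => Complex.arg (f ε - Complex.I * (A:ℂ)))
        (nhdsWithin 0 (Set.Ioi 0)) (nhds (-(Real.pi/2))) := by
      have hsp : (f 0 - Complex.I * (A:ℂ)) ∈ Complex.slitPlane := by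
        rw [Complex.mem_slitPlane_iff]
        right
        rw [him1]; intro h; linarith
      have hca : ContinuousAt (fun ε : ℝ => Complex.arg (f ε - Complex.I * (A:ℂ))) 0 := by
        have hg : ContinuousAt (fun ε : ℝ => f ε - Complex.I * (A:ℂ)) 0 :=
          (hfc.sub continuous_const).continuousAt
        exact ContinuousAt.comp (g := Complex.arg)
          (f := fun ε : ℝ => f ε - Complex.I*(A:ℂ)) (x := 0)
          (Complex.continuousAt_arg hsp) hg
      have hval : Complex.arg (f 0 - Complex.I * (A:ℂ)) = -(Real.pi/2) := by
        apply Complex.arg_eq_neg_pi_div_two_iff.mpr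
        refine ⟨by rw [hre1]; simp, by rw [him1]; linarith⟩
      rw [← hval]
      exact hca.tendsto.mono_left nhdsWithin_le_nhds
    have := hargc.add_const (2*Real.pi)
    have heq2 : -(Real.pi/2) + 2*Real.pi = 3*Real.pi/2 := by ring
    rw [heq2] at this
    refine this.congr' ?_
    filter_upwards [self_mem_nhdsWithin] with ε hε
    exact (heq ε hε).symm
  -- second argument part
  have harg2 : Tendsto (fun ε : ℝ => argS (f ε + Complex.I * (A:ℂ)))
      (nhdsWithin 0 (Set.Ioi 0)) (nhds (Real.pi/2)) := by
    have heq : ∀ ε : ℝ, argS (f ε + Complex.I * (A:ℂ)) = Complex.arg (f ε + Complex.I * (A:ℂ)) :=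
      fun ε => argS_eq_arg_of_im_pos (by rw [him2]; linarith)
    have hsp : (f 0 + Complex.I * (A:ℂ)) ∈ Complex.slitPlane := by
      rw [Complex.mem_slitPlane_iff]
      right
      rw [him2]; intro h; linarith
    have hca : ContinuousAt (fun ε : ℝ => Complex.arg (f ε + Complex.I * (A:ℂ))) 0 := by
      have hg : ContinuousAt (fun ε : ℝ => f ε + Complex.I * (A:ℂ)) 0 :=
        (hfc.add continuous_const).continuousAt
      exact ContinuousAt.comp (g := Complex.arg)
        (f := fun ε : ℝ => f ε + Complex.I*(A:ℂ)) (x := 0)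
        (Complex.continuousAt_arg hsp) hg
    have hval : Complex.arg (f 0 + Complex.I * (A:ℂ)) = Real.pi/2 := by
      apply Complex.arg_eq_pi_div_two_iff.mpr
      refine ⟨by rw [hre2]; simp, by rw [him2]; linarith⟩
    have htd : Tendsto (fun ε : ℝ => Complex.arg (f ε + Complex.I*(A:ℂ)))
        (nhdsWithin 0 (Set.Ioi 0)) (nhds (Complex.arg (f 0 + Complex.I*(A:ℂ)))) :=
      hca.tendsto.mono_left nhdsWithin_le_nhds
    rw [hval] at htd
    exact htd.congr (fun ε => (heq ε).symm)
  -- combine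
  have hargsum : Tendsto (fun ε : ℝ =>
      ((argS (f ε - Complex.I * (A:ℂ)) + argS (f ε + Complex.I * (A:ℂ)))/2 : ℝ))
      (nhdsWithin 0 (Set.Ioi 0)) (nhds Real.pi) := by
    have := (harg1.add harg2).div_const 2
    have heq : (3*Real.pi/2 + Real.pi/2)/2 = Real.pi := by ring
    rwa [heq] at this
  have hexp : Tendsto (fun ε : ℝ => Complex.exp (Complex.I *
      (((argS (f ε - Complex.I * (A:ℂ)) + argS (f ε + Complex.I * (A:ℂ)))/2 : ℝ) : ℂ)))
      (nhdsWithin 0 (Set.Ioi 0)) (nhds (-1)) := by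
    have h1 : Tendsto (fun ε : ℝ => Complex.I *
        (((argS (f ε - Complex.I * (A:ℂ)) + argS (f ε + Complex.I * (A:ℂ)))/2 : ℝ) : ℂ))
        (nhdsWithin 0 (Set.Ioi 0)) (nhds (Complex.I * (Real.pi : ℂ))) :=
      (Complex.continuous_ofReal.tendsto _).comp hargsum |>.const_mul Complex.I
    have h2 := (Complex.continuous_exp.tendsto _).comp h1
    have h3 : Complex.exp (Complex.I * (Real.pi:ℂ)) = -1 := by
      rw [mul_comm]
      exact Complex.exp_pi_mul_I
    rwa [h3] at h2
  have hfinal := (Complex.continuous_ofReal.tendsto _).comp hmod |>.mul hexp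
  have : (((Real.sqrt ((A - y)*(A + y)) : ℝ) : ℂ)) * (-1) = -(((Real.sqrt ((A - y)*(A + y)) : ℝ) : ℂ)) := by
    ring
  rw [this] at hfinal
  exact hfinal

open Filter Topology in
lemma part_b {A : ℝ} (hA : 0 < A) {y : ℝ} (hy : y ∈ Set.Ioo (-A) A) :
    Filter.Tendsto (fun ε : ℝ => dfun A (Complex.I * (y:ℂ) - (ε:ℂ)) * dfun A (Complex.I * (y:ℂ)))
      (nhdsWithin 0 (Set.Ioi 0)) (nhds (2 * lamBr A (Complex.I * (y:ℂ)) / (A:ℂ))) := by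
  obtain ⟨hy1, hy2⟩ := hy
  set r := Real.sqrt ((A - y)*(A + y)) with hrdef
  have hrpos : 0 < r := Real.sqrt_pos.mpr (by nlinarith)
  have hrsq : r^2 = (A - y)*(A + y) := Real.sq_sqrt (by nlinarith)
  have hA0 : (A:ℂ) ≠ 0 := by exact_mod_cast hA.ne'
  have hrc : ((r:ℝ):ℂ)^2 = (A:ℂ)^2 - (y:ℂ)^2 := by
    have h1 : ((r^2 : ℝ):ℂ) = (((A - y)*(A + y) : ℝ):ℂ) := by rw [hrsq]
    push_cast at h1
    linear_combination h1
  set L : ℂ := ((2*r^2/A^2 : ℝ) : ℂ) + ((2*r*y/A^2 : ℝ) : ℂ) * Complex.I with hLdef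
  have hLre : L.re = 2*r^2/A^2 := by
    simp only [hLdef, Complex.add_re, Complex.ofReal_re, Complex.mul_re, Complex.I_re,
      Complex.I_im, Complex.ofReal_im]
    ring
  have hLim : L.im = 2*r*y/A^2 := by
    simp only [hLdef, Complex.add_im, Complex.ofReal_im, Complex.mul_im, Complex.I_re,
      Complex.I_im, Complex.ofReal_re]
    ring
  have hLre_pos : 0 < L.re := by rw [hLre]; positivity
  have hL0 : L ≠ 0 := by
    intro h; rw [h] at hLre_pos; simp at hLre_pos
  have hden_ne : -((r:ℝ):ℂ) + Complex.I*(y:ℂ) ≠ 0 := by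
    intro h
    have := congrArg Complex.re h
    simp at this
    linarith
  have hLeq : 2 * (-((r:ℝ):ℂ)) / (-((r:ℝ):ℂ) + Complex.I*(y:ℂ)) = L := by
    rw [div_eq_iff hden_ne, hLdef]
    push_cast
    field_simp
    linear_combination ((r:ℝ):ℂ)*hrc - (((r:ℝ):ℂ)*((y:ℝ):ℂ)^2)*Complex.I_sq
  -- limit of Dfun
  have hDlim : Tendsto (fun ε : ℝ => Dfun A (Complex.I * (y:ℂ) - (ε:ℂ)))
      (nhdsWithin 0 (Set.Ioi 0)) (nhds L) := by
    have hlam := lamBr_tendsto hA ⟨hy1, hy2⟩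
    have hnum : Tendsto (fun ε : ℝ => 2 * lamBr A (Complex.I * (y:ℂ) - (ε:ℂ)))
        (nhdsWithin 0 (Set.Ioi 0)) (nhds (2 * (-((r:ℝ):ℂ)))) := hlam.const_mul 2
    have hid : Tendsto (fun ε : ℝ => (Complex.I * (y:ℂ) - (ε:ℂ)))
        (nhdsWithin 0 (Set.Ioi 0)) (nhds (Complex.I * (y:ℂ))) := by
      have hc : Continuous (fun ε : ℝ => (Complex.I * (y:ℂ) - (ε:ℂ))) := by fun_prop
      have := hc.tendsto 0
      simp only [Complex.ofReal_zero, sub_zero] at this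
      exact this.mono_left nhdsWithin_le_nhds
    have hden : Tendsto (fun ε : ℝ => lamBr A (Complex.I * (y:ℂ) - (ε:ℂ)) + (Complex.I * (y:ℂ) - (ε:ℂ)))
        (nhdsWithin 0 (Set.Ioi 0)) (nhds (-((r:ℝ):ℂ) + Complex.I*(y:ℂ))) := hlam.add hid
    have := hnum.div hden hden_ne
    rw [hLeq] at this
    exact this
  -- limit of dfun
  have hcpow : ContinuousAt (fun z : ℂ => z ^ ((1:ℂ)/2)) L :=
    continuousAt_cpow_const (Complex.mem_slitPlane_iff.mpr (Or.inl hLre_pos))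
  have hdlim : Tendsto (fun ε : ℝ => dfun A (Complex.I * (y:ℂ) - (ε:ℂ)))
      (nhdsWithin 0 (Set.Ioi 0)) (nhds (L ^ ((1:ℂ)/2))) := by
    unfold dfun
    exact hcpow.tendsto.comp hDlim
  -- the constant factor
  have hden2 : ((r:ℝ):ℂ) + Complex.I*(y:ℂ) ≠ 0 := by
    intro h
    have := congrArg Complex.re h
    simp at this
    linarith
  have hconjL : (starRingEnd ℂ) L = ((2*r^2/A^2 : ℝ) : ℂ) - ((2*r*y/A^2 : ℝ) : ℂ) * Complex.I := by
    rw [hLdef, map_add, map_mul, Complex.conj_I, Complex.conj_ofReal, Complex.conj_ofReal]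
    ring
  have hMeq : Dfun A (Complex.I * (y:ℂ)) = (starRingEnd ℂ) L := by
    unfold Dfun
    rw [lamBr_cut ⟨hy1, hy2⟩, ← hrdef, hconjL, div_eq_iff hden2]
    push_cast
    field_simp
    linear_combination (-((r:ℝ):ℂ))*hrc + (((r:ℝ):ℂ)*((y:ℝ):ℂ)^2)*Complex.I_sq
  have hMval : dfun A (Complex.I * (y:ℂ)) = ((starRingEnd ℂ) L) ^ ((1:ℂ)/2) := by
    unfold dfun
    rw [hMeq]
  -- product of the two square roots
  have habsL : ‖L‖ = 2*r/A := by
    have hnsq : Complex.normSq L = (2*r/A)^2 := by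
      rw [Complex.normSq_apply, hLre, hLim]
      field_simp
      linear_combination hrsq
    rw [Complex.norm_def, hnsq, Real.sqrt_sq (by positivity)]
  have hargL : L.arg ≠ Real.pi := by
    intro h
    rw [Complex.arg_eq_pi_iff] at h
    linarith [h.1]
  have hconjL0 : (starRingEnd ℂ) L ≠ 0 := by
    simpa using hL0
  have hprod : L ^ ((1:ℂ)/2) * ((starRingEnd ℂ) L) ^ ((1:ℂ)/2) = ((2*r/A : ℝ) : ℂ) := by
    rw [Complex.cpow_def_of_ne_zero hL0, Complex.cpow_def_of_ne_zero hconjL0,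
      Complex.log_conj L hargL, ← Complex.exp_add]
    have harg : Complex.log L * ((1:ℂ)/2) + (starRingEnd ℂ) (Complex.log L) * ((1:ℂ)/2)
        = (((Complex.log L).re : ℝ) : ℂ) := by
      have h := Complex.add_conj (Complex.log L)
      calc Complex.log L * ((1:ℂ)/2) + (starRingEnd ℂ) (Complex.log L) * ((1:ℂ)/2)
          = (Complex.log L + (starRingEnd ℂ) (Complex.log L)) * ((1:ℂ)/2) := by ring
        _ = ((2*(Complex.log L).re : ℝ):ℂ) * ((1:ℂ)/2) := by rw [h]
        _ = (((Complex.log L).re : ℝ) : ℂ) := by push_cast; ring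
    rw [harg, ← Complex.ofReal_exp, Complex.log_re, Real.exp_log (by rw [habsL]; positivity)]
    rw [habsL]
  -- assemble
  have hval : L ^ ((1:ℂ)/2) * dfun A (Complex.I * (y:ℂ)) = ((2*r/A : ℝ) : ℂ) := by
    rw [hMval, hprod]
  have htarget : 2 * lamBr A (Complex.I * (y:ℂ)) / (A:ℂ) = ((2*r/A : ℝ) : ℂ) := by
    rw [lamBr_cut ⟨hy1, hy2⟩, ← hrdef]
    push_cast
    ring
  rw [htarget, ← hval]
  exact hdlim.mul_const (dfun A (Complex.I * (y:ℂ)))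

/-- (a) `d(k;A) = 1 + O(1/k)` as `k → ∞`: there are `C > 0`, `R > 0` with
`|d(k;A) − 1| ≤ C/|k|` for `|k| ≥ R`; and (b) for every `y ∈ (−A,A)`,
`lim_{ε→0⁺} d(iy − ε;A)·d(iy;A) = 2λ(iy;A)/A`. -/
theorem dfun_asymptotics_and_jump (A : ℝ) (hA : 0 < A) :
    (∃ C > (0 : ℝ), ∃ R > (0 : ℝ), ∀ k : ℂ, R ≤ ‖k‖ →
      ‖dfun A k - 1‖ ≤ C / ‖k‖) ∧
    (∀ y ∈ Set.Ioo (-A) A,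
      Filter.Tendsto
        (fun ε : ℝ => dfun A (Complex.I * (y : ℂ) - (ε : ℂ)) * dfun A (Complex.I * (y : ℂ)))
        (nhdsWithin 0 (Set.Ioi 0))
        (nhds (2 * lamBr A (Complex.I * (y : ℂ)) / (A : ℂ)))) := by
  constructor
  · exact ⟨A, hA, 5*A, by positivity, fun k hk => part_a hA hk⟩
  · intro y hy
    exact part_b hA hy
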